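/- Let H be a d×d Hermitian complex matrix with eigenvalues E₀ ≤ E₁ ≤ … ≤ E_{d−1} (with multiplicity) and corresponding orthonormal eigenbasis τ₀, …, τ_{d−1}; for m < d let P_m be the orthogonal projection onto the span of τ₀, …, τ_{m−1}, and define Π_m(ρ) = P_m ρ P_m + Tr((I−P_m)ρ)·τ₀τ₀†. Then for every density matrix ρ on ℂ^d one has Tr(H·Π_m(ρ)) ≤ Tr(H·ρ). -/

import Mathlib

/-!
Write `c k = ⟨τ k, ρ τ k⟩ ≥ 0` for the populations of `ρ` in the eigenbasis. Then
`Tr(Hρ) = ∑ k, E k * c k`, while the channel keeps the populations below `m` and moves all the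
others to the ground state, so `Tr(H Π_m(ρ)) = ∑ k < m, E k * c k + (∑ k ≥ m, c k) * E 0`.
Since `E 0 ≤ E k`, moving population to the ground state cannot raise the energy.
-/

open Matrix
open scoped ComplexOrder

theorem Finset.sum_mul_add_sum_compl_mul_le {ι R : Type*} [Fintype ι] [DecidableEq ι]
    [CommSemiring R] [PartialOrder R] [IsOrderedRing R] (s : Finset ι) {E c : ι → R} {e : R}
    (hE : ∀ k ∈ sᶜ, e ≤ E k) (hc : ∀ k ∈ sᶜ, 0 ≤ c k) :
    ∑ k ∈ s, E k * c k + (∑ k ∈ sᶜ, c k) * e ≤ ∑ k, E k * c k := by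
  rw [← Finset.sum_add_sum_compl s, Finset.sum_mul]
  refine add_le_add le_rfl (Finset.sum_le_sum fun k hk => ?_)
  rw [mul_comm]
  exact mul_le_mul_of_nonneg_right (hE k hk) (hc k hk)

namespace Matrix

variable {n R : Type*} [Fintype n]

theorem trace_vecMulVec_mul [CommSemiring R] (a b : n → R) (A : Matrix n n R) :
    (vecMulVec a b * A).trace = b ⬝ᵥ A *ᵥ a := by
  rw [vecMulVec_mul, trace_vecMulVec, dotProduct_comm, dotProduct_mulVec]

theorem trace_sum_smul_vecMulVec_mul [CommSemiring R] {ι : Type*} (s : Finset ι) (f : ι → R)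
    (a b : ι → n → R) (A : Matrix n n R) :
    ((∑ k ∈ s, f k • vecMulVec (a k) (b k)) * A).trace = ∑ k ∈ s, f k * (b k ⬝ᵥ A *ᵥ a k) := by
  simp only [Finset.sum_mul, trace_sum, smul_mul_assoc, trace_smul, trace_vecMulVec_mul,
    smul_eq_mul]

section Orthonormal

variable [DecidableEq n] [CommSemiring R] [StarRing R] {τ : n → n → R}

theorem sum_smul_vecMulVec_star_mulVec_of_orthonormal
    (hτ : ∀ i j, star (τ i) ⬝ᵥ τ j = if i = j then 1 else 0) (s : Finset n) (f : n → R) (j : n) :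
    (∑ k ∈ s, f k • vecMulVec (τ k) (star (τ k))) *ᵥ τ j = if j ∈ s then f j • τ j else 0 := by
  simp only [sum_mulVec, smul_mulVec, vecMulVec_mulVec, hτ, op_smul_eq_smul, ite_smul, one_smul,
    zero_smul, smul_ite, smul_zero, Finset.sum_ite_eq']

theorem sum_vecMulVec_star_mulVec_of_orthonormal
    (hτ : ∀ i j, star (τ i) ⬝ᵥ τ j = if i = j then 1 else 0) (s : Finset n) (j : n) :
    (∑ k ∈ s, vecMulVec (τ k) (star (τ k))) *ᵥ τ j = if j ∈ s then τ j else 0 := by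
  simpa using sum_smul_vecMulVec_star_mulVec_of_orthonormal hτ s 1 j

theorem star_vecMul_sum_vecMulVec_star_of_orthonormal
    (hτ : ∀ i j, star (τ i) ⬝ᵥ τ j = if i = j then 1 else 0) (s : Finset n) (j : n) :
    star (τ j) ᵥ* (∑ k ∈ s, vecMulVec (τ k) (star (τ k))) = if j ∈ s then star (τ j) else 0 := by
  simp only [vecMul_sum, vecMul_vecMulVec, hτ, ite_smul, one_smul, zero_smul, Finset.sum_ite_eq]

theorem star_dotProduct_mulVec_compression_of_orthonormal
    (hτ : ∀ i j, star (τ i) ⬝ᵥ τ j = if i = j then 1 else 0) (s : Finset n) (A : Matrix n n R)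
    (j : n) :
    star (τ j) ⬝ᵥ ((∑ k ∈ s, vecMulVec (τ k) (star (τ k))) * A *
        ∑ k ∈ s, vecMulVec (τ k) (star (τ k))) *ᵥ τ j =
      if j ∈ s then star (τ j) ⬝ᵥ A *ᵥ τ j else 0 := by
  rw [← mulVec_mulVec, ← mulVec_mulVec, dotProduct_mulVec,
    star_vecMul_sum_vecMulVec_star_of_orthonormal hτ, sum_vecMulVec_star_mulVec_of_orthonormal hτ]
  split_ifs <;> simp

theorem trace_eq_sum_star_dotProduct_mulVec_of_orthonormal
    (hτ : ∀ i j, star (τ i) ⬝ᵥ τ j = if i = j then 1 else 0) (A : Matrix n n R) :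
    A.trace = ∑ k, star (τ k) ⬝ᵥ A *ᵥ τ k := by
  set U : Matrix n n R := (of τ)ᵀ
  have hU : Uᴴ * U = 1 := by
    ext i j
    simpa [U, mul_apply, dotProduct, one_apply] using hτ i j
  calc A.trace = (Uᴴ * A * U).trace := by
        rw [Matrix.mul_assoc, trace_mul_comm, Matrix.mul_assoc, mul_eq_one_comm.mp hU, mul_one]
    _ = ∑ k, star (τ k) ⬝ᵥ A *ᵥ τ k := by
        simp only [trace, diag, mul_mul_apply, U]
        rfl

end Orthonormal

end Matrix

theorem energy_nonincreasing_spectral_proj_channel_general {d : ℕ}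
    (E : Fin d → ℝ) (hE_mono : Monotone E)
    (τ : Fin d → (Fin d → ℂ))
    (hτ_on : ∀ i j : Fin d, star (τ i) ⬝ᵥ τ j = if i = j then 1 else 0)
    (H : Matrix (Fin d) (Fin d) ℂ)
    (hH : H = ∑ k : Fin d, (E k : ℂ) • vecMulVec (τ k) (star (τ k)))
    (m : Fin d)
    (Pm : Matrix (Fin d) (Fin d) ℂ)
    (hPm : Pm = ∑ k ∈ Finset.Iio m, vecMulVec (τ k) (star (τ k)))
    (ρ : Matrix (Fin d) (Fin d) ℂ)
    (hρ : ρ.PosSemidef) :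
    (H * (Pm * ρ * Pm +
        ((1 - Pm) * ρ).trace •
          vecMulVec (τ ⟨0, m.pos⟩) (star (τ ⟨0, m.pos⟩)))).trace.re ≤
      (H * ρ).trace.re := by
  set c : Fin d → ℂ := fun k => star (τ k) ⬝ᵥ ρ *ᵥ τ k
  set i₀ : Fin d := ⟨0, m.pos⟩
  have h_energy : (H * ρ).trace = ∑ k, (E k : ℂ) * c k := by
    rw [hH, trace_sum_smul_vecMulVec_mul]
  have h_kept : (H * (Pm * ρ * Pm)).trace = ∑ k ∈ Finset.Iio m, (E k : ℂ) * c k := by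
    simp only [hH, trace_sum_smul_vecMulVec_mul, hPm,
      star_dotProduct_mulVec_compression_of_orthonormal hτ_on, mul_ite, mul_zero,
      Finset.sum_ite_mem, Finset.univ_inter, c]
  have h_ground : (H * vecMulVec (τ i₀) (star (τ i₀))).trace = E i₀ := by
    rw [trace_mul_comm, trace_vecMulVec_mul, hH,
      sum_smul_vecMulVec_star_mulVec_of_orthonormal hτ_on, if_pos (Finset.mem_univ _),
      dotProduct_smul, hτ_on, if_pos rfl, smul_eq_mul, mul_one]
  have h_moved : ((1 - Pm) * ρ).trace = ∑ k ∈ (Finset.Iio m)ᶜ, c k := by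
    rw [sub_mul, one_mul, trace_sub, trace_eq_sum_star_dotProduct_mulVec_of_orthonormal hτ_on ρ,
      sub_eq_iff_eq_add, ← Finset.sum_compl_add_sum (Finset.Iio m), hPm]
    simp only [Finset.sum_mul, trace_sum, trace_vecMulVec_mul, c]
  rw [mul_add, trace_add, mul_smul_comm, trace_smul, smul_eq_mul, h_kept, h_ground, h_moved,
    h_energy]
  refine (Complex.le_def.mp (Finset.sum_mul_add_sum_compl_mul_le _ ?_ ?_)).1
  · exact fun k _ => Complex.real_le_real.mpr (hE_mono (Nat.zero_le _))
  · exact fun k _ => hρ.dotProduct_mulVec_nonneg (τ k)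

/-- For `H = Σ_k E_k |τ_k⟩⟨τ_k|` with nondecreasing eigenvalues `E` and
orthonormal eigenbasis `τ`, the channel
`Π_m(ρ) = P_m ρ P_m + Tr((I−P_m)ρ)·τ₀τ₀†` (with `P_m` the projection onto the
first `m` eigenvectors) does not increase the mean energy:
`Tr(H·Π_m(ρ)) ≤ Tr(H·ρ)` for every density matrix `ρ`. -/
theorem energy_nonincreasing_spectral_proj_channel {d : ℕ}
    (E : Fin d → ℝ) (hE_mono : Monotone E)
    (τ : Fin d → (Fin d → ℂ))
    (hτ_on : ∀ i j : Fin d, star (τ i) ⬝ᵥ τ j = if i = j then 1 else 0)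
    (H : Matrix (Fin d) (Fin d) ℂ)
    (hH : H = ∑ k : Fin d, (E k : ℂ) • vecMulVec (τ k) (star (τ k)))
    (m : Fin d)
    (Pm : Matrix (Fin d) (Fin d) ℂ)
    (hPm : Pm = ∑ k ∈ Finset.Iio m, vecMulVec (τ k) (star (τ k)))
    (ρ : Matrix (Fin d) (Fin d) ℂ)
    (hρ : ρ.PosSemidef) (hρ_tr : ρ.trace = 1) :
    (H * (Pm * ρ * Pm +
        ((1 - Pm) * ρ).trace •
          vecMulVec (τ ⟨0, m.pos⟩) (star (τ ⟨0, m.pos⟩)))).trace.re ≤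
      (H * ρ).trace.re :=
  energy_nonincreasing_spectral_proj_channel_general E hE_mono τ hτ_on H hH m Pm hPm ρ hρ
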